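/- Let R_{g,n} = ℂ[α,β,γ,δ₁,…,δ_n]/(γ^{g+1}, δ₁²+β−2, …, δ_n²+β−2). Let V ⊆ ℂ[ω,β,γ,δ₁,…,δ_n] (where ω = α + (δ₁+⋯+δ_n)/2) be the ℂ-linear span of all monomials ω^j β^k γ^s δ₁^{a₁}⋯δ_n^{a_n} with s ≤ g and a_i ∈ {0,1}. Then the composition V ↪ ℂ[α,β,γ,δ₁,…,δ_n] ↠ R_{g,n} is a ℂ-linear isomorphism. -/

import Mathlib

/-!
STATEMENT 12: Let `R_{g,n} = ℂ[ω,β,γ,δ₁,…,δ_n]/(γ^{g+1}, δ₁²+β−2, …, δ_n²+β−2)`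
(using the identification `ℂ[α,β,γ,δᵢ] = ℂ[ω,β,γ,δᵢ]` via `ω = α + (Σδᵢ)/2`).
Let `V` be the ℂ-linear span of the monomials `ω^j β^k γ^s δ₁^{a₁}⋯δ_n^{a_n}` with
`s ≤ g` and `a_i ∈ {0,1}`.  Then the composition `V ↪ ℂ[ω,β,γ,δ₁,…,δ_n] ↠ R_{g,n}`
is a ℂ-linear isomorphism (i.e., bijective).
Variables: `ω = X (inl 0)`, `β = X (inl 1)`, `γ = X (inl 2)`, `δ_i = X (inr i)`.
-/

open MvPolynomial

/-- The ideal `(γ^{g+1}, δ₁²+β−2, …, δ_n²+β−2)`. -/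
noncomputable def Stmt12.rel (n g : ℕ) : Ideal (MvPolynomial (Fin 3 ⊕ Fin n) ℂ) :=
  Ideal.span ({(X (Sum.inl 2) : MvPolynomial (Fin 3 ⊕ Fin n) ℂ) ^ (g + 1)} ∪
    Set.range fun i : Fin n =>
      (X (Sum.inr i) : MvPolynomial (Fin 3 ⊕ Fin n) ℂ) ^ 2 + X (Sum.inl 1) - 2)

/-- The span `V` of the monomials `ω^j β^k γ^s δ^a`, `s ≤ g`, `a_i ∈ {0,1}`. -/
noncomputable def Stmt12.V (n g : ℕ) : Submodule ℂ (MvPolynomial (Fin 3 ⊕ Fin n) ℂ) :=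
  Submodule.span ℂ
    {p | ∃ (j k s : ℕ) (a : Fin n → ℕ), s ≤ g ∧ (∀ i, a i ≤ 1) ∧
      p = X (Sum.inl 0) ^ j * X (Sum.inl 1) ^ k * X (Sum.inl 2) ^ s *
            ∏ i, X (Sum.inr i) ^ a i}

/-!
Reduce each monomial by `γ^(g+1) ↦ 0` and `δᵢ² ↦ 2 - β`: the exponent of `δᵢ` drops to its
parity at the cost of a power of `2 - β`, which stays in `V`. Extended ℂ-linearly this is a
normal-form map onto `V` which fixes `V` and does not change classes modulo the ideal. It kills
the ideal because it commutes with multiplication by `β` and turns multiplication by `δᵢ²` into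
multiplication by `2 - β`. A projection onto `V` along the ideal identifies `V` with the quotient.
-/

theorem Ideal.Quotient.bijective_mk_of_projection {R A : Type*} [Semiring R] [CommRing A]
    [Module R A] {I : Ideal A} {V : Submodule R A} (N : A →ₗ[R] A) (hker : ∀ p ∈ I, N p = 0)
    (hfix : ∀ v ∈ V, N v = v) (hmem : ∀ p, N p ∈ V)
    (hmk : ∀ p, Ideal.Quotient.mk I (N p) = Ideal.Quotient.mk I p) :
    Function.Bijective fun v : V => Ideal.Quotient.mk I (v : A) := by
  refine ⟨fun v w hvw => ?_, fun x => ?_⟩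
  · have h := hker _ (Ideal.Quotient.eq.mp hvw)
    rw [map_sub, hfix v v.2, hfix w w.2, sub_eq_zero] at h
    exact Subtype.ext h
  · obtain ⟨p, rfl⟩ := Ideal.Quotient.mk_surjective x
    exact ⟨⟨N p, hmem p⟩, hmk p⟩

namespace Stmt12

open Sum

local notation "𝒫" n => MvPolynomial (Fin 3 ⊕ Fin n) ℂ

variable {n : ℕ}

theorem monomial_one_eq (d : (Fin 3 ⊕ Fin n) →₀ ℕ) :
    (monomial d 1 : 𝒫 n) = X (inl 0) ^ d (inl 0) * X (inl 1) ^ d (inl 1) *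
      X (inl 2) ^ d (inl 2) * ∏ i, X (inr i) ^ d (inr i) := by
  rw [monomial_eq, C_1, one_mul, Finsupp.prod_fintype _ _ fun _ => pow_zero _,
    Fintype.prod_sum_type, Fin.prod_univ_three]

/-- `δᵢ^a` reduced modulo `δᵢ² = 2 - β`. -/
noncomputable def deltaNF (i : Fin n) (a : ℕ) : 𝒫 n :=
  (2 - X (inl 1)) ^ (a / 2) * X (inr i) ^ (a % 2)

theorem deltaNF_add_two (i : Fin n) (a : ℕ) :
    deltaNF i (a + 2) = (2 - X (inl 1)) * deltaNF i a := by
  rw [deltaNF, deltaNF, Nat.add_div_right a two_pos, Nat.add_mod_right, pow_succ]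
  ring

theorem deltaNF_of_le_one (i : Fin n) {a : ℕ} (ha : a ≤ 1) : deltaNF i a = X (inr i) ^ a := by
  rw [deltaNF, Nat.div_eq_of_lt (by omega), Nat.mod_eq_of_lt (by omega), pow_zero, one_mul]

variable (g : ℕ)

noncomputable def monomialNF (d : (Fin 3 ⊕ Fin n) →₀ ℕ) : 𝒫 n :=
  if d (inl 2) ≤ g then
    X (inl 0) ^ d (inl 0) * X (inl 1) ^ d (inl 1) * X (inl 2) ^ d (inl 2) *
      ∏ i, deltaNF i (d (inr i))
  else 0

noncomputable def normalForm : (𝒫 n) →ₗ[ℂ] 𝒫 n :=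
  (basisMonomials (Fin 3 ⊕ Fin n) ℂ).constr ℂ (monomialNF g)

variable {g}

theorem normalForm_monomial (d : (Fin 3 ⊕ Fin n) →₀ ℕ) (c : ℂ) :
    normalForm g (monomial d c) = c • monomialNF g d := by
  rw [← mul_one c, ← smul_eq_mul, ← smul_monomial, map_smul, smul_eq_mul, mul_one]
  exact congrArg _ ((basisMonomials _ ℂ).constr_basis ℂ (monomialNF g) d)

theorem monomialNF_of_lt (d : (Fin 3 ⊕ Fin n) →₀ ℕ) (hd : g < d (inl 2)) :
    monomialNF g d = 0 :=
  if_neg (by omega)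

theorem monomialNF_add_single_beta (d : (Fin 3 ⊕ Fin n) →₀ ℕ) :
    monomialNF g (d + Finsupp.single (inl 1) 1) = X (inl 1) * monomialNF g d := by
  simp only [monomialNF, Finsupp.add_apply, Finsupp.single_apply, inl.injEq, Fin.reduceEq,
    reduceCtorEq, if_true, if_false, add_zero]
  split_ifs <;> ring

theorem monomialNF_add_single_delta (d : (Fin 3 ⊕ Fin n) →₀ ℕ) (j : Fin n) :
    monomialNF g (d + Finsupp.single (inr j) 2) = (2 - X (inl 1)) * monomialNF g d := by
  have hδ : ∀ i, deltaNF i ((d + Finsupp.single (inr j) 2 : (Fin 3 ⊕ Fin n) →₀ ℕ) (inr i)) =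
      (if j = i then 2 - X (inl 1) else 1) * deltaNF i (d (inr i)) := by
    intro i
    by_cases h : j = i
    · subst h; simp [deltaNF_add_two]
    · simp [h]
  have hinl : ∀ k, (d + Finsupp.single (inr j) 2 : (Fin 3 ⊕ Fin n) →₀ ℕ) (inl k) = d (inl k) := by
    simp
  simp only [monomialNF, hδ, hinl, Finset.prod_mul_distrib, Finset.prod_ite_eq, Finset.mem_univ,
    if_true]
  split_ifs <;> ring

theorem normalForm_mul_eq_zero {x : 𝒫 n} (h : ∀ d, normalForm g (monomial d 1 * x) = 0)
    (r : 𝒫 n) : normalForm g (r * x) = 0 := by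
  induction r using MvPolynomial.induction_on' with
  | monomial d c =>
    rw [← mul_one c, ← C_mul_monomial, mul_assoc, ← smul_eq_C_mul, map_smul, h, smul_zero]
  | add p q hp hq => rw [add_mul, map_add, hp, hq, add_zero]

theorem normalForm_monomial_mul_X_pow (d : (Fin 3 ⊕ Fin n) →₀ ℕ) (v : Fin 3 ⊕ Fin n)
    (k : ℕ) :
    normalForm g (monomial d 1 * X v ^ k) = monomialNF g (d + Finsupp.single v k) := by
  rw [X_pow_eq_monomial, monomial_mul, one_mul, normalForm_monomial, one_smul]

theorem normalForm_mul_X_gamma_pow (r : 𝒫 n) : normalForm g (r * X (inl 2) ^ (g + 1)) = 0 :=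
  normalForm_mul_eq_zero (fun d => by
    rw [normalForm_monomial_mul_X_pow]
    exact monomialNF_of_lt _ (by simp only [Finsupp.add_apply, Finsupp.single_eq_same]; omega)) r

theorem normalForm_mul_delta_rel (j : Fin n) (r : 𝒫 n) :
    normalForm g (r * (X (inr j) ^ 2 + X (inl 1) - 2)) = 0 :=
  normalForm_mul_eq_zero (fun d => by
    rw [mul_sub, mul_add, mul_two, map_sub, map_add, map_add, normalForm_monomial_mul_X_pow,
      ← pow_one (X (inl 1)), normalForm_monomial_mul_X_pow, monomialNF_add_single_delta,
      monomialNF_add_single_beta, normalForm_monomial, one_smul]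
    ring) r

theorem normalForm_eq_zero_of_mem_rel {p : 𝒫 n} (hp : p ∈ rel n g) : normalForm g p = 0 := by
  suffices ∀ r, normalForm g (r * p) = 0 by simpa using this 1
  refine Submodule.span_induction ?_ ?_ ?_ ?_ hp
  · rintro _ (rfl | ⟨j, rfl⟩)
    exacts [normalForm_mul_X_gamma_pow, normalForm_mul_delta_rel j]
  · simp
  · intro x y _ _ hx hy r
    rw [mul_add, map_add, hx, hy, add_zero]
  · intro a x _ hx r
    rw [smul_eq_mul, ← mul_assoc, hx]

theorem X_gamma_pow_mem_rel : (X (inl 2) : 𝒫 n) ^ (g + 1) ∈ rel n g :=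
  Ideal.subset_span (Set.mem_union_left _ rfl)

theorem X_delta_sq_add_sub_mem_rel (i : Fin n) :
    (X (inr i) : 𝒫 n) ^ 2 + X (inl 1) - 2 ∈ rel n g :=
  Ideal.subset_span (Set.mem_union_right _ ⟨i, rfl⟩)

theorem mk_X_delta_pow (i : Fin n) (a : ℕ) :
    Ideal.Quotient.mk (rel n g) (X (inr i) ^ a) = Ideal.Quotient.mk (rel n g) (deltaNF i a) := by
  have hsq : Ideal.Quotient.mk (rel n g) (X (inr i) ^ 2) =
      Ideal.Quotient.mk (rel n g) (2 - X (inl 1)) := by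
    refine Ideal.Quotient.eq.mpr ?_
    convert X_delta_sq_add_sub_mem_rel (g := g) i using 1
    ring
  conv_lhs => rw [← Nat.div_add_mod a 2, pow_add, pow_mul]
  simp only [deltaNF, map_mul, map_pow, hsq]

theorem mk_monomialNF (d : (Fin 3 ⊕ Fin n) →₀ ℕ) :
    Ideal.Quotient.mk (rel n g) (monomialNF g d) =
      Ideal.Quotient.mk (rel n g) (monomial d 1) := by
  rw [monomial_one_eq, monomialNF]
  split_ifs with h
  · simp only [map_mul, map_prod, mk_X_delta_pow]
  · rw [map_zero, eq_comm, Ideal.Quotient.eq_zero_iff_mem]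
    have hγ : (X (inl 2) : 𝒫 n) ^ d (inl 2) ∈ rel n g :=
      (rel n g).pow_mem_of_pow_mem X_gamma_pow_mem_rel (by omega)
    exact Ideal.mul_mem_right _ _ (Ideal.mul_mem_left _ _ hγ)

theorem mk_normalForm (p : 𝒫 n) :
    Ideal.Quotient.mk (rel n g) (normalForm g p) = Ideal.Quotient.mk (rel n g) p := by
  induction p using MvPolynomial.induction_on' with
  | monomial d c =>
    rw [normalForm_monomial, smul_eq_C_mul, map_mul, mk_monomialNF, ← map_mul, C_mul_monomial,
      mul_one]
  | add p q hp hq => rw [map_add, map_add, map_add, hp, hq]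

theorem X_beta_mul_mem_V {v : 𝒫 n} (hv : v ∈ V n g) : X (inl 1) * v ∈ V n g := by
  suffices V n g ≤ (V n g).comap (LinearMap.mulLeft ℂ (X (inl 1))) from this hv
  refine Submodule.span_le.mpr ?_
  rintro _ ⟨j, k, s, a, hs, ha, rfl⟩
  exact Submodule.subset_span
    ⟨j, k + 1, s, a, hs, ha, by simp only [LinearMap.mulLeft_apply]; ring⟩

theorem two_sub_X_beta_pow_mul_mem_V (B : ℕ) {v : 𝒫 n} (hv : v ∈ V n g) :
    (2 - X (inl 1)) ^ B * v ∈ V n g := by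
  induction B with
  | zero => simpa using hv
  | succ B ih =>
    rw [pow_succ', mul_assoc, sub_mul, two_mul]
    exact sub_mem (add_mem ih ih) (X_beta_mul_mem_V ih)

theorem monomialNF_mem_V (d : (Fin 3 ⊕ Fin n) →₀ ℕ) : monomialNF g d ∈ V n g := by
  unfold monomialNF
  split_ifs with h
  · have hδ : ∏ i, deltaNF i (d (inr i)) =
        (2 - X (inl 1)) ^ (∑ i, d (inr i) / 2) * ∏ i, X (inr i) ^ (d (inr i) % 2) := by
      simp only [deltaNF, Finset.prod_mul_distrib, Finset.prod_pow_eq_pow_sum]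
    rw [hδ, mul_left_comm]
    exact two_sub_X_beta_pow_mul_mem_V _ (Submodule.subset_span
      ⟨_, _, _, _, h, fun i => Nat.le_of_lt_succ (Nat.mod_lt _ two_pos), rfl⟩)
  · exact zero_mem _

theorem normalForm_mem_V (p : 𝒫 n) : normalForm g p ∈ V n g := by
  induction p using MvPolynomial.induction_on' with
  | monomial d c => rw [normalForm_monomial]; exact Submodule.smul_mem _ _ (monomialNF_mem_V d)
  | add p q hp hq => rw [map_add]; exact add_mem hp hq

theorem normalForm_monomial_of_le (d : (Fin 3 ⊕ Fin n) →₀ ℕ) (hγ : d (inl 2) ≤ g)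
    (hδ : ∀ i, d (inr i) ≤ 1) : normalForm g (monomial d 1) = monomial d 1 := by
  rw [normalForm_monomial, one_smul, monomialNF, if_pos hγ, monomial_one_eq]
  simp only [deltaNF_of_le_one _ (hδ _)]

theorem normalForm_eq_self_of_mem_V {v : 𝒫 n} (hv : v ∈ V n g) : normalForm g v = v := by
  refine Submodule.span_induction ?_ (map_zero _) (fun x y _ _ hx hy => by rw [map_add, hx, hy])
    (fun c x _ hx => by rw [map_smul, hx]) hv
  rintro _ ⟨j, k, s, a, hs, ha, rfl⟩
  have := normalForm_monomial_of_le (Finsupp.equivFunOnFinite.symm (Sum.elim ![j, k, s] a)) hs ha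
  simpa [monomial_one_eq] using this

end Stmt12

open Stmt12 in
theorem stmt12 (n g : ℕ) :
    Function.Bijective
      (fun v : V n g =>
        Ideal.Quotient.mk (rel n g) (v : MvPolynomial (Fin 3 ⊕ Fin n) ℂ)) :=
  Ideal.Quotient.bijective_mk_of_projection (normalForm g)
    (fun _ => normalForm_eq_zero_of_mem_rel) (fun _ => normalForm_eq_self_of_mem_V)
    normalForm_mem_V mk_normalForm
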